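/- arXiv:1912.13225 — 2 statements merged into one kernel-verified Lean document; each statement's English description precedes it below -/
import Mathlib

section
/- (Spectral estimate for the GenEO-2 preconditioner with inexact coarse solve) Assume: ∑_{i=1}^N R_iᵀ D_i R_i = I; ‖∑_{i=1}^N R_iᵀ V_i‖_A² ≤ k₀ ∑_{i=1}^N ‖R_iᵀ V_i‖_A² for all V_i; μ′ ⟨Ẽ u, u⟩ ≤ ⟨E u, u⟩ ≤ μ ⟨Ẽ u, u⟩ for all u ∈ ℝᵐ with μ, μ′ > 0. For each i = 1,…,N let B_i be a symmetric positive definite n_i×n_i matrix, V_i ⊆ ℝ^{n_i} a subspace with R_iᵀ D_i (V_i) ⊆ V₀, W_i the B_i-orthogonal complement of V_i, ξ_i the B_i-orthogonal projection onto V_i, q_i the Euclidean orthogonal projection onto W_i, and B_i† := (I − ξ_i) B_i⁻¹; assume ‖R_iᵀ D_i v‖_A² ≤ γ ⟨B_i v, v⟩ for all v ∈ W_i, and that there exist linear maps p_j : ℝ^{n_j} → ℝ^{n_j} with range(R_jᵀ D_j p_j) ⊆ V₀, range(I − p_j) ⊆ W_j, and ∑_{j=1}^N ⟨B_j (I − p_j)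 R_j U, (I − p_j) R_j U⟩ ≤ (k₁/τ) ⟨A U, U⟩ for all U. Set ε_A := ‖P₀ − P̃₀‖_A, c_T := 1 / ( (1/μ′) (1 + ε_A √(k₀ k₁ γ / τ))² + k₁/τ ), c_R := [ k₀ γ (1 + ε_A²) + μ + √( (k₀ γ (1 + ε_A²) − μ)² + 4 μ k₀ γ ε_A² ) ] / 2, and define M⁻¹ := Z Ẽ⁻¹ Zᵀ + (I − P̃₀) ( ∑_{i=1}^N R_iᵀ D_i q_i B_i† q_i D_i R_i ) (I − P̃₀ᵀ). Then every eigenvalue λ of M⁻¹ A (i.e., every λ ∈ ℝ such that M⁻¹ A U = λ U for some U ≠ 0) satisfies c_T ≤ λ ≤ c_R. -/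
/-!
The preconditioner factors through the fictitious space `ℝᵐ × ∏ᵢ ℝ^{nᵢ}` with the form
`b((u₀, v), (u₀', v')) = ⟨Ẽ u₀, u₀'⟩ + ∑ᵢ ⟨Bᵢ vᵢ, vᵢ'⟩` and the map
`ℛ(u₀, v) = Z u₀ + (I − P̃₀) ∑ᵢ Rᵢᵀ Dᵢ vᵢ`: on the set `S` where every `vᵢ ∈ Wᵢ`, `M⁻¹ r = ℛ x`
for the `x ∈ S` with `b(x, ·) = ⟨ℛ ·, r⟩` on `S`. As in Nepomnyaschikh's fictitious space lemma,
the eigenvalues of `M⁻¹ A` then lie between the stability constant of a decomposition `U = ℛ x`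
and the continuity constant of `ℛ` on `S`.

For continuity, `ℛ x` splits `A`-orthogonally into `Z u₀ + (P₀ − P̃₀) s` and `(I − P₀) s`, where
`s = ∑ᵢ Rᵢᵀ Dᵢ vᵢ`; with `‖Z u₀‖_A² ≤ μ ⟨Ẽ u₀, u₀⟩` and `‖s‖_A² ≤ k₀ γ ∑ᵢ ⟨Bᵢ vᵢ, vᵢ⟩` this leaves
a `2 × 2` quadratic form whose larger eigenvalue is `c_R`. For stability, the `pⱼ` split `U` into
`Z β + ∑ⱼ Rⱼᵀ Dⱼ (I − pⱼ) Rⱼ U`, and the GenEO-2 bound controls the local parts.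
-/

open Matrix

/-- The norm induced by an SPD matrix `A`: `‖x‖_A = √(⟨A x, x⟩)`. -/
noncomputable def aNorm {n : ℕ} (A : Matrix (Fin n) (Fin n) ℝ) (x : Fin n → ℝ) : ℝ :=
  Real.sqrt ((A *ᵥ x) ⬝ᵥ x)

/-- The operator norm of a matrix `M` induced by the `A`-norm. -/
noncomputable def aOpNorm {n : ℕ} (A M : Matrix (Fin n) (Fin n) ℝ) : ℝ :=
  sSup { t : ℝ | ∃ x : Fin n → ℝ, x ≠ 0 ∧ t = aNorm A (M *ᵥ x) / aNorm A x }

theorem fictitiousSpace_eigenvalue_bounds {E X : Type*} [AddCommGroup E] [Module ℝ E]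
    [AddCommGroup X] [Module ℝ X] (a : LinearMap.BilinForm ℝ E) (b : LinearMap.BilinForm ℝ X)
    (hb : LinearMap.IsSymm b) (hb₀ : ∀ x, 0 ≤ b x x) (ℛ : X → E) (S : Set X) {cT cR lam : ℝ}
    {U : E} {xs : X} (hcT : 0 < cT) (hU : 0 < a U U) (hxs : xs ∈ S) (hℛxs : ℛ xs = lam • U)
    (hdual : ∀ x ∈ S, a (ℛ x) U = b xs x) (hcont : ∀ x ∈ S, a (ℛ x) (ℛ x) ≤ cR * b x x)
    (hdecomp : ∃ x ∈ S, ℛ x = U ∧ cT * b x x ≤ a U U) :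
    cT ≤ lam ∧ lam ≤ cR := by
  have hbxs : b xs xs = lam * a U U := by
    rw [← hdual xs hxs, hℛxs, map_smul, LinearMap.smul_apply, smul_eq_mul]
  obtain ⟨x, hx, hℛx, hbx⟩ := hdecomp
  have hcs : a U U * a U U ≤ a U U * (lam * b x x) := by
    have := b.apply_sq_le_of_symm hb₀ hb xs x
    rw [← hdual x hx, hℛx, hbxs] at this
    linarith
  have hUb : a U U ≤ lam * b x x := le_of_mul_le_mul_left hcs hU
  have hbx₀ : 0 < b x x := (hb₀ x).lt_of_ne fun h => by rw [← h, mul_zero] at hUb; linarith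
  have hlow : cT ≤ lam := le_of_mul_le_mul_right (hbx.trans hUb) hbx₀
  refine ⟨hlow, ?_⟩
  have hup := hcont xs hxs
  simp only [hbxs, hℛxs, map_smul, LinearMap.smul_apply, smul_eq_mul] at hup
  exact le_of_mul_le_mul_right hup (mul_pos (hcT.trans_le hlow) hU)

/-- The right-hand side is the larger eigenvalue of `!![p, b; b, q]` times `x ^ 2 + y ^ 2`. -/
theorem sq_add_two_mul_add_sq_le (p q b x y : ℝ) :
    p * x ^ 2 + 2 * b * x * y + q * y ^ 2
      ≤ (p + q + √((p - q) ^ 2 + 4 * b ^ 2)) / 2 * (x ^ 2 + y ^ 2) := by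
  set s := √((p - q) ^ 2 + 4 * b ^ 2)
  have hs : s ^ 2 = (p - q) ^ 2 + 4 * b ^ 2 := Real.sq_sqrt (by positivity)
  obtain ⟨h₁, h₂⟩ := abs_le.mp (Real.abs_le_sqrt (by nlinarith) : |p - q| ≤ s)
  -- `c = (q - p + s) / 2` is the gap between the top eigenvalue and `p`
  obtain ⟨c, hc⟩ : ∃ c, c = (q - p + s) / 2 := ⟨_, rfl⟩
  have hcb : c * (c + p - q) = b ^ 2 := by rw [hc]; linear_combination hs / 4
  have hdefect : c * (c * x ^ 2 - 2 * b * x * y + (c + p - q) * y ^ 2) = (c * x - b * y) ^ 2 := by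
    linear_combination y ^ 2 * hcb
  rcases (show 0 ≤ c by linarith).lt_or_eq with hc₀ | hc₀
  · have := (mul_nonneg_iff_of_pos_left hc₀).mp (hdefect ▸ sq_nonneg _)
    linear_combination this + (x ^ 2 + y ^ 2) * hc
  · have hb : b = 0 := by
      rw [← hc₀, zero_mul] at hcb
      exact pow_eq_zero_iff two_ne_zero |>.mp hcb.symm
    subst hb
    nlinarith [mul_nonneg (show 0 ≤ p - q by linarith) (sq_nonneg y)]

theorem add_mul_sq_add_sq_le {α t X Y p k e : ℝ} (ht : 0 ≤ t) (hX : 0 ≤ X)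
    (hY : 0 ≤ Y) (hp : 0 ≤ p) (hk : 0 ≤ k) (he : 0 ≤ e) (hαX : α ^ 2 ≤ p * X)
    (htY : t ^ 2 ≤ k * Y) :
    (α + e * t) ^ 2 + t ^ 2
      ≤ (k * (1 + e ^ 2) + p + √((k * (1 + e ^ 2) - p) ^ 2 + 4 * p * k * e ^ 2)) / 2
        * (X + Y) := by
  have hα' : α ≤ √p * √X := by
    rw [← Real.sqrt_mul hp]; exact Real.le_sqrt_of_sq_le hαX
  have ht' : t ≤ √k * √Y := by
    rw [← Real.sqrt_mul hk]; exact Real.le_sqrt_of_sq_le htY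
  have hαt : α * t ≤ (√p * √X) * (√k * √Y) := mul_le_mul hα' ht' ht (by positivity)
  have hX' := Real.sq_sqrt hX
  have hY' := Real.sq_sqrt hY
  have hb : (e * (√p * √k)) ^ 2 = p * k * e ^ 2 := by
    rw [mul_pow, mul_pow, Real.sq_sqrt hp, Real.sq_sqrt hk]; ring
  have h2 := sq_add_two_mul_add_sq_le p (k * (1 + e ^ 2)) (e * (√p * √k)) √X √Y
  rw [hb, hX', hY', show (p - k * (1 + e ^ 2)) ^ 2 + 4 * (p * k * e ^ 2)
    = (k * (1 + e ^ 2) - p) ^ 2 + 4 * p * k * e ^ 2 by ring] at h2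
  calc (α + e * t) ^ 2 + t ^ 2 = α ^ 2 + 2 * e * (α * t) + (1 + e ^ 2) * t ^ 2 := by ring
    _ ≤ p * X + 2 * e * ((√p * √X) * (√k * √Y)) + (1 + e ^ 2) * (k * Y) := by gcongr
    _ ≤ _ := by linear_combination h2

section Quadratic

variable {ι : Type*} [Fintype ι] {A : Matrix ι ι ℝ}

theorem Matrix.mulVec_dotProduct_eq_dotProduct_transpose_mulVec {κ : Type*} [Fintype κ]
    (M : Matrix ι κ ℝ) (v : κ → ℝ) (w : ι → ℝ) : (M *ᵥ v) ⬝ᵥ w = v ⬝ᵥ (Mᵀ *ᵥ w) := by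
  rw [dotProduct_comm, dotProduct_mulVec, dotProduct_comm, mulVec_transpose]

theorem Matrix.IsHermitian.mulVec_dotProduct_comm (hA : A.IsHermitian) (x y : ι → ℝ) :
    (A *ᵥ x) ⬝ᵥ y = (A *ᵥ y) ⬝ᵥ x := by
  rw [mulVec_dotProduct_eq_dotProduct_transpose_mulVec, ← conjTranspose_eq_transpose_of_trivial,
    hA.eq, dotProduct_comm]

theorem Matrix.PosSemidef.mulVec_dotProduct_self_nonneg (hA : A.PosSemidef) (x : ι → ℝ) :
    0 ≤ (A *ᵥ x) ⬝ᵥ x := by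
  simpa [dotProduct_comm] using hA.dotProduct_mulVec_nonneg x

theorem Matrix.PosSemidef.mulVec_dotProduct_sq_le (hA : A.PosSemidef) (x y : ι → ℝ) :
    ((A *ᵥ x) ⬝ᵥ y) ^ 2 ≤ ((A *ᵥ x) ⬝ᵥ x) * ((A *ᵥ y) ⬝ᵥ y) := by
  classical
  have h := (toBilin' A).apply_mul_apply_le_of_forall_zero_le (fun z => by
    simpa only [toBilin'_apply', dotProduct_comm] using hA.mulVec_dotProduct_self_nonneg z) x y
  simp only [toBilin'_apply'] at h
  rwa [dotProduct_comm x (A *ᵥ y), dotProduct_comm y (A *ᵥ x), dotProduct_comm x (A *ᵥ x),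
    dotProduct_comm y (A *ᵥ y), hA.isHermitian.mulVec_dotProduct_comm y x, ← sq] at h

end Quadratic

section aNorm

variable {n : ℕ} {A : Matrix (Fin n) (Fin n) ℝ}

theorem aNorm_nonneg (x : Fin n → ℝ) : 0 ≤ aNorm A x := Real.sqrt_nonneg _

theorem aNorm_sq (hA : A.PosSemidef) (x : Fin n → ℝ) : aNorm A x ^ 2 = (A *ᵥ x) ⬝ᵥ x :=
  Real.sq_sqrt (hA.mulVec_dotProduct_self_nonneg x)

theorem aNorm_pos (hA : A.PosDef) {x : Fin n → ℝ} (hx : x ≠ 0) : 0 < aNorm A x :=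
  Real.sqrt_pos.mpr (by simpa [dotProduct_comm] using hA.dotProduct_mulVec_pos hx)

theorem aNorm_smul (t : ℝ) (x : Fin n → ℝ) : aNorm A (t • x) = |t| * aNorm A x := by
  rw [aNorm, aNorm, mulVec_smul, smul_dotProduct, dotProduct_smul, smul_eq_mul, smul_eq_mul,
    ← mul_assoc, ← sq, Real.sqrt_mul (sq_nonneg t), Real.sqrt_sq_eq_abs]

theorem aNorm_neg (x : Fin n → ℝ) : aNorm A (-x) = aNorm A x := by
  simpa using aNorm_smul (A := A) (-1) x

theorem mulVec_dotProduct_le_aNorm_mul (hA : A.PosSemidef) (x y : Fin n → ℝ) :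
    (A *ᵥ x) ⬝ᵥ y ≤ aNorm A x * aNorm A y := by
  refine le_of_sq_le_sq ?_ (mul_nonneg (aNorm_nonneg x) (aNorm_nonneg y))
  rw [mul_pow, aNorm_sq hA, aNorm_sq hA]
  exact hA.mulVec_dotProduct_sq_le x y

theorem aNorm_add_le (hA : A.PosSemidef) (x y : Fin n → ℝ) :
    aNorm A (x + y) ≤ aNorm A x + aNorm A y := by
  refine le_of_sq_le_sq ?_ (add_nonneg (aNorm_nonneg x) (aNorm_nonneg y))
  rw [aNorm_sq hA, add_sq, aNorm_sq hA, aNorm_sq hA, mulVec_add, add_dotProduct, dotProduct_add,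
    dotProduct_add, hA.isHermitian.mulVec_dotProduct_comm y x]
  linarith [mulVec_dotProduct_le_aNorm_mul hA x y]

theorem aNorm_sub_le (hA : A.PosSemidef) (x y : Fin n → ℝ) :
    aNorm A (x - y) ≤ aNorm A x + aNorm A y := by
  simpa only [sub_eq_add_neg, aNorm_neg] using aNorm_add_le hA x (-y)

theorem continuous_aNorm : Continuous (aNorm A) := by
  unfold aNorm; fun_prop

theorem aOpNorm_nonneg (A M : Matrix (Fin n) (Fin n) ℝ) : 0 ≤ aOpNorm A M :=
  Real.sSup_nonneg <| by
    rintro _ ⟨x, -, rfl⟩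
    exact div_nonneg (aNorm_nonneg _) (aNorm_nonneg _)

theorem aNorm_mulVec_le_aOpNorm_mul (hA : A.PosDef) (M : Matrix (Fin n) (Fin n) ℝ)
    (x : Fin n → ℝ) : aNorm A (M *ᵥ x) ≤ aOpNorm A M * aNorm A x := by
  rcases eq_or_ne x 0 with rfl | hx
  · simp [aNorm]
  set f : (Fin n → ℝ) → ℝ := fun x => aNorm A (M *ᵥ x) / aNorm A x
  -- `f` is scale invariant, so its values are those it takes on the compact unit sphere
  have hf : ∀ x : Fin n → ℝ, x ≠ 0 → f (‖x‖⁻¹ • x) = f x := by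
    intro x hx
    simp only [f, mulVec_smul, aNorm_smul]
    exact mul_div_mul_left _ _ (by positivity)
  have hbdd : BddAbove {t | ∃ x : Fin n → ℝ, x ≠ 0 ∧ t = f x} := by
    refine ((isCompact_sphere (0 : Fin n → ℝ) 1).bddAbove_image (f := f) ?_).mono ?_
    · refine (continuous_aNorm.comp (continuous_const.matrix_mulVec continuous_id)).continuousOn.div
        continuous_aNorm.continuousOn fun y hy => (aNorm_pos hA ?_).ne'
      rintro rfl
      simp at hy
    · rintro _ ⟨y, hy, rfl⟩
      exact ⟨‖y‖⁻¹ • y, by simp [norm_smul, hy], hf y hy⟩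
  have := le_csSup hbdd ⟨x, hx, rfl⟩
  rwa [div_le_iff₀ (aNorm_pos hA hx)] at this

theorem aNorm_sq_add_of_transpose_mulVec_eq_zero {m : ℕ} (hA : A.PosSemidef)
    {Z : Matrix (Fin n) (Fin m) ℝ} (w : Fin m → ℝ) {y : Fin n → ℝ} (hy : Zᵀ *ᵥ (A *ᵥ y) = 0) :
    aNorm A (Z *ᵥ w + y) ^ 2 = aNorm A (Z *ᵥ w) ^ 2 + aNorm A y ^ 2 := by
  have hcross : (A *ᵥ (Z *ᵥ w)) ⬝ᵥ y = 0 := by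
    rw [hA.isHermitian.mulVec_dotProduct_comm, dotProduct_comm,
      mulVec_dotProduct_eq_dotProduct_transpose_mulVec, hy, dotProduct_zero]
  rw [aNorm_sq hA, aNorm_sq hA, aNorm_sq hA, mulVec_add, add_dotProduct, dotProduct_add,
    dotProduct_add, hA.isHermitian.mulVec_dotProduct_comm y, hcross]
  ring

end aNorm

section CoarseSpace

variable {n m : ℕ} {A : Matrix (Fin n) (Fin n) ℝ} {Z : Matrix (Fin n) (Fin m) ℝ}

/-- `Z Ẽ⁻¹ Zᵀ A`: this is `P̃₀`, and `P₀` for `Ẽ = Zᵀ A Z`. -/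
noncomputable def coarseProj (A : Matrix (Fin n) (Fin n) ℝ) (Z : Matrix (Fin n) (Fin m) ℝ)
    (Et : Matrix (Fin m) (Fin m) ℝ) : Matrix (Fin n) (Fin n) ℝ :=
  Z * Et⁻¹ * Zᵀ * A

theorem coarseProj_mulVec (Et : Matrix (Fin m) (Fin m) ℝ) (x : Fin n → ℝ) :
    coarseProj A Z Et *ᵥ x = Z *ᵥ (Et⁻¹ *ᵥ (Zᵀ *ᵥ (A *ᵥ x))) := by
  simp only [coarseProj, mulVec_mulVec, Matrix.mul_assoc]

theorem transpose_mulVec_mulVec_mulVec (w : Fin m → ℝ) :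
    Zᵀ *ᵥ (A *ᵥ (Z *ᵥ w)) = (Zᵀ * A * Z) *ᵥ w := by
  rw [mulVec_mulVec, mulVec_mulVec]

theorem aNorm_mulVec_sq (hA : A.PosSemidef) (w : Fin m → ℝ) :
    aNorm A (Z *ᵥ w) ^ 2 = ((Zᵀ * A * Z) *ᵥ w) ⬝ᵥ w := by
  rw [aNorm_sq hA, dotProduct_comm, mulVec_dotProduct_eq_dotProduct_transpose_mulVec Z w,
    transpose_mulVec_mulVec_mulVec, dotProduct_comm]

theorem posDef_transpose_mul_mul (hA : A.PosDef) (hZ : LinearIndependent ℝ Zᵀ) :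
    (Zᵀ * A * Z).PosDef := by
  simpa using hA.conjTranspose_mul_mul_same (Matrix.mulVec_injective_iff.mpr hZ)

theorem coarseProj_mulVec_mulVec (hA : A.PosDef) (hZ : LinearIndependent ℝ Zᵀ)
    (w : Fin m → ℝ) : coarseProj A Z (Zᵀ * A * Z) *ᵥ (Z *ᵥ w) = Z *ᵥ w := by
  rw [coarseProj_mulVec, transpose_mulVec_mulVec_mulVec, mulVec_mulVec w,
    nonsing_inv_mul _ (posDef_transpose_mul_mul hA hZ).det_pos.ne'.isUnit, one_mulVec]

theorem transpose_mulVec_mulVec_sub_coarseProj (hA : A.PosDef) (hZ : LinearIndependent ℝ Zᵀ)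
    (x : Fin n → ℝ) : Zᵀ *ᵥ (A *ᵥ (x - coarseProj A Z (Zᵀ * A * Z) *ᵥ x)) = 0 := by
  rw [coarseProj_mulVec, mulVec_sub, mulVec_sub, transpose_mulVec_mulVec_mulVec,
    mulVec_mulVec _ _ (Zᵀ * A * Z)⁻¹,
    mul_nonsing_inv _ (posDef_transpose_mul_mul hA hZ).det_pos.ne'.isUnit, one_mulVec, sub_self]

theorem aNorm_sq_eq_coarseProj (hA : A.PosDef) (hZ : LinearIndependent ℝ Zᵀ) (x : Fin n → ℝ) :
    aNorm A x ^ 2 = aNorm A (coarseProj A Z (Zᵀ * A * Z) *ᵥ x) ^ 2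
      + aNorm A (x - coarseProj A Z (Zᵀ * A * Z) *ᵥ x) ^ 2 := by
  have h := aNorm_sq_add_of_transpose_mulVec_eq_zero hA.posSemidef
    ((Zᵀ * A * Z)⁻¹ *ᵥ (Zᵀ *ᵥ (A *ᵥ x))) (transpose_mulVec_mulVec_sub_coarseProj hA hZ x)
  rwa [← coarseProj_mulVec, add_sub_cancel] at h

theorem aNorm_coarseProj_le (hA : A.PosDef) (hZ : LinearIndependent ℝ Zᵀ) (x : Fin n → ℝ) :
    aNorm A (coarseProj A Z (Zᵀ * A * Z) *ᵥ x) ≤ aNorm A x := by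
  refine le_of_sq_le_sq ?_ (aNorm_nonneg x)
  rw [aNorm_sq_eq_coarseProj hA hZ x]
  exact le_add_of_nonneg_right (sq_nonneg _)

theorem aNorm_sub_coarseProj_le (hA : A.PosDef) (hZ : LinearIndependent ℝ Zᵀ) (x : Fin n → ℝ) :
    aNorm A (x - coarseProj A Z (Zᵀ * A * Z) *ᵥ x) ≤ aNorm A x := by
  refine le_of_sq_le_sq ?_ (aNorm_nonneg x)
  rw [aNorm_sq_eq_coarseProj hA hZ x]
  exact le_add_of_nonneg_left (sq_nonneg _)

end CoarseSpace

section FictitiousSpace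

variable {κ ι : Type*} [Fintype κ] [Fintype ι] {d : ι → Type*} [∀ i, Fintype (d i)]

noncomputable def fictitiousForm (Et : Matrix κ κ ℝ) (B : ∀ i, Matrix (d i) (d i) ℝ) :
    LinearMap.BilinForm ℝ ((κ → ℝ) × ∀ i, d i → ℝ) :=
  LinearMap.mk₂ ℝ (fun x y => (Et *ᵥ x.1) ⬝ᵥ y.1 + ∑ i, (B i *ᵥ x.2 i) ⬝ᵥ y.2 i)
    (fun x x' y => by
      simp only [Prod.fst_add, Prod.snd_add, Pi.add_apply, mulVec_add, add_dotProduct,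
        Finset.sum_add_distrib]
      ring)
    (fun c x y => by
      simp only [Prod.smul_fst, Prod.smul_snd, Pi.smul_apply, mulVec_smul, smul_dotProduct,
        smul_eq_mul, mul_add, Finset.mul_sum])
    (fun x y y' => by
      simp only [Prod.fst_add, Prod.snd_add, Pi.add_apply, dotProduct_add, Finset.sum_add_distrib]
      ring)
    (fun c x y => by
      simp only [Prod.smul_fst, Prod.smul_snd, Pi.smul_apply, dotProduct_smul, smul_eq_mul,
        mul_add, Finset.mul_sum])

variable {Et : Matrix κ κ ℝ} {B : ∀ i, Matrix (d i) (d i) ℝ}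

@[simp]
theorem fictitiousForm_apply (x y : (κ → ℝ) × ∀ i, d i → ℝ) :
    fictitiousForm Et B x y = (Et *ᵥ x.1) ⬝ᵥ y.1 + ∑ i, (B i *ᵥ x.2 i) ⬝ᵥ y.2 i :=
  rfl

theorem isSymm_fictitiousForm (hEt : Et.IsHermitian) (hB : ∀ i, (B i).IsHermitian) :
    LinearMap.IsSymm (fictitiousForm Et B) :=
  ⟨fun x y => by
    simp only [RingHom.id_apply, fictitiousForm_apply, hEt.mulVec_dotProduct_comm x.1,
      fun i => (hB i).mulVec_dotProduct_comm (x.2 i)]⟩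

theorem fictitiousForm_self_nonneg (hEt : Et.PosSemidef) (hB : ∀ i, (B i).PosSemidef)
    (x : (κ → ℝ) × ∀ i, d i → ℝ) : 0 ≤ fictitiousForm Et B x x :=
  add_nonneg (hEt.mulVec_dotProduct_self_nonneg _)
    (Finset.sum_nonneg fun i _ => (hB i).mulVec_dotProduct_self_nonneg _)

end FictitiousSpace

section LocalSolve

variable {ι : Type*} [Fintype ι] [DecidableEq ι] {B ξ : Matrix ι ι ℝ} {V : Submodule ℝ (ι → ℝ)}

noncomputable def bDagger (ξ B : Matrix ι ι ℝ) : Matrix ι ι ℝ := (1 - ξ) * B⁻¹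

theorem bDagger_mulVec_mem_orthogonal
    (hξ : ∀ u, ∀ v ∈ V, (B *ᵥ (u - ξ *ᵥ u)) ⬝ᵥ v = 0) (g : ι → ℝ) :
    ∀ v ∈ V, (B *ᵥ (bDagger ξ B *ᵥ g)) ⬝ᵥ v = 0 := by
  simpa only [bDagger, ← mulVec_mulVec, sub_mulVec, one_mulVec] using hξ (B⁻¹ *ᵥ g)

theorem mulVec_bDagger_mulVec_dotProduct (hB : B.PosDef) (hξ : ∀ u, ξ *ᵥ u ∈ V) (g : ι → ℝ)
    {w : ι → ℝ} (hw : ∀ v ∈ V, (B *ᵥ w) ⬝ᵥ v = 0) :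
    (B *ᵥ (bDagger ξ B *ᵥ g)) ⬝ᵥ w = g ⬝ᵥ w := by
  rw [bDagger, ← mulVec_mulVec, sub_mulVec, one_mulVec, mulVec_sub, mulVec_mulVec _ B,
    mul_nonsing_inv _ hB.det_pos.ne'.isUnit, one_mulVec, sub_dotProduct,
    hB.isHermitian.mulVec_dotProduct_comm _ w, hw _ (hξ _), sub_zero]

end LocalSolve

section GenEO

variable {n m N : ℕ} {nd : Fin N → ℕ}

def prolong (R : ∀ i, Matrix (Fin (nd i)) (Fin n) ℝ) (D : ∀ i, Matrix (Fin (nd i)) (Fin (nd i)) ℝ)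
    (v : ∀ i, Fin (nd i) → ℝ) : Fin n → ℝ :=
  ∑ i, (R i)ᵀ *ᵥ (D i *ᵥ v i)

/-- The map `ℛ` of the fictitious space lemma. -/
noncomputable def assemble (A : Matrix (Fin n) (Fin n) ℝ) (Z : Matrix (Fin n) (Fin m) ℝ)
    (Et : Matrix (Fin m) (Fin m) ℝ) (R : ∀ i, Matrix (Fin (nd i)) (Fin n) ℝ)
    (D : ∀ i, Matrix (Fin (nd i)) (Fin (nd i)) ℝ) (x : (Fin m → ℝ) × ∀ i, Fin (nd i) → ℝ) :
    Fin n → ℝ :=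
  Z *ᵥ x.1 + (1 - coarseProj A Z Et) *ᵥ prolong R D x.2

noncomputable def fictitiousLift (A : Matrix (Fin n) (Fin n) ℝ) (Z : Matrix (Fin n) (Fin m) ℝ)
    (Et : Matrix (Fin m) (Fin m) ℝ) (R : ∀ i, Matrix (Fin (nd i)) (Fin n) ℝ)
    (D ξ B q : ∀ i, Matrix (Fin (nd i)) (Fin (nd i)) ℝ) (r : Fin n → ℝ) :
    (Fin m → ℝ) × ∀ i, Fin (nd i) → ℝ :=
  (Et⁻¹ *ᵥ (Zᵀ *ᵥ r),
    fun i => bDagger (ξ i) (B i) *ᵥ (q i *ᵥ (D i *ᵥ (R i *ᵥ ((1 - (coarseProj A Z Et)ᵀ) *ᵥ r)))))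

variable {A : Matrix (Fin n) (Fin n) ℝ} {Z : Matrix (Fin n) (Fin m) ℝ}
  {Et : Matrix (Fin m) (Fin m) ℝ} {R : ∀ i, Matrix (Fin (nd i)) (Fin n) ℝ}
  {D B : ∀ i, Matrix (Fin (nd i)) (Fin (nd i)) ℝ} {k₀ γ : ℝ}

theorem mulVec_prolong_dotProduct_le (hk₀ : 0 ≤ k₀)
    (hk₀bound : ∀ V : ∀ i, Fin (nd i) → ℝ,
      (A *ᵥ (∑ i, (R i)ᵀ *ᵥ V i)) ⬝ᵥ (∑ i, (R i)ᵀ *ᵥ V i)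
        ≤ k₀ * ∑ i, (A *ᵥ ((R i)ᵀ *ᵥ V i)) ⬝ᵥ ((R i)ᵀ *ᵥ V i))
    {v : ∀ i, Fin (nd i) → ℝ}
    (hv : ∀ i, (A *ᵥ ((R i)ᵀ *ᵥ (D i *ᵥ v i))) ⬝ᵥ ((R i)ᵀ *ᵥ (D i *ᵥ v i))
      ≤ γ * ((B i *ᵥ v i) ⬝ᵥ v i)) :
    (A *ᵥ prolong R D v) ⬝ᵥ prolong R D v ≤ k₀ * γ * ∑ i, (B i *ᵥ v i) ⬝ᵥ v i :=
  calc (A *ᵥ prolong R D v) ⬝ᵥ prolong R D v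
      ≤ k₀ * ∑ i, (A *ᵥ ((R i)ᵀ *ᵥ (D i *ᵥ v i))) ⬝ᵥ ((R i)ᵀ *ᵥ (D i *ᵥ v i)) :=
        hk₀bound fun i => D i *ᵥ v i
    _ ≤ k₀ * ∑ i, γ * ((B i *ᵥ v i) ⬝ᵥ v i) := by gcongr with i; exact hv i
    _ = k₀ * γ * ∑ i, (B i *ᵥ v i) ⬝ᵥ v i := by rw [← Finset.mul_sum, mul_assoc]

theorem precond_mulVec_eq_assemble {ξ q : ∀ i, Matrix (Fin (nd i)) (Fin (nd i)) ℝ}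
    {Vs : ∀ i, Submodule ℝ (Fin (nd i) → ℝ)}
    (hξorth : ∀ i (u : Fin (nd i) → ℝ), ∀ v ∈ Vs i, (B i *ᵥ (u - ξ i *ᵥ u)) ⬝ᵥ v = 0)
    (hqid : ∀ i (v : Fin (nd i) → ℝ), (∀ w ∈ Vs i, (B i *ᵥ v) ⬝ᵥ w = 0) → q i *ᵥ v = v)
    (r : Fin n → ℝ) :
    (Z * Et⁻¹ * Zᵀ + (1 - coarseProj A Z Et)
        * (∑ i, (R i)ᵀ * D i * q i * bDagger (ξ i) (B i) * q i * D i * R i)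
        * (1 - (coarseProj A Z Et)ᵀ)) *ᵥ r
      = assemble A Z Et R D (fictitiousLift A Z Et R D ξ B q r) := by
  have hq : ∀ i g, q i *ᵥ (bDagger (ξ i) (B i) *ᵥ g) = bDagger (ξ i) (B i) *ᵥ g :=
    fun i g => hqid i _ (bDagger_mulVec_mem_orthogonal (hξorth i) g)
  simp only [assemble, fictitiousLift, prolong, add_mulVec, ← mulVec_mulVec, sum_mulVec, hq]

theorem assemble_dotProduct_eq_fictitiousForm {ξ q : ∀ i, Matrix (Fin (nd i)) (Fin (nd i)) ℝ}
    {Vs : ∀ i, Submodule ℝ (Fin (nd i) → ℝ)} (hEt : IsUnit Et.det) (hB : ∀ i, (B i).PosDef)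
    (hD : ∀ i, (D i).IsDiag) (hξmem : ∀ i (u : Fin (nd i) → ℝ), ξ i *ᵥ u ∈ Vs i)
    (hqorth : ∀ i (u v : Fin (nd i) → ℝ),
      (∀ w ∈ Vs i, (B i *ᵥ v) ⬝ᵥ w = 0) → (u - q i *ᵥ u) ⬝ᵥ v = 0)
    (r : Fin n → ℝ) {x : (Fin m → ℝ) × ∀ i, Fin (nd i) → ℝ}
    (hx : ∀ i, ∀ w ∈ Vs i, (B i *ᵥ x.2 i) ⬝ᵥ w = 0) :
    assemble A Z Et R D x ⬝ᵥ r = fictitiousForm Et B (fictitiousLift A Z Et R D ξ B q r) x := by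
  simp only [assemble, fictitiousForm_apply, fictitiousLift, add_dotProduct, prolong]
  congr 1
  · rw [mulVec_mulVec, mul_nonsing_inv _ hEt, one_mulVec,
      mulVec_dotProduct_eq_dotProduct_transpose_mulVec, dotProduct_comm]
  · rw [mulVec_dotProduct_eq_dotProduct_transpose_mulVec, transpose_sub, transpose_one,
      sum_dotProduct]
    refine Finset.sum_congr rfl fun i _ => ?_
    rw [mulVec_bDagger_mulVec_dotProduct (hB i) (hξmem i) _ (hx i),
      mulVec_dotProduct_eq_dotProduct_transpose_mulVec, transpose_transpose,
      mulVec_dotProduct_eq_dotProduct_transpose_mulVec, (hD i).isSymm.eq, dotProduct_comm,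
      ← sub_eq_zero, ← sub_dotProduct]
    exact hqorth i _ _ (hx i)

theorem aNorm_assemble_sq_le (hA : A.PosDef) (hZ : LinearIndependent ℝ Zᵀ)
    (hEt : Et.PosSemidef) (hB : ∀ i, (B i).PosSemidef) {ε μ : ℝ} (hε₀ : 0 ≤ ε)
    (hε : ∀ y, aNorm A ((coarseProj A Z (Zᵀ * A * Z) - coarseProj A Z Et) *ᵥ y) ≤ ε * aNorm A y)
    (hμ : 0 ≤ μ) (hk₀ : 0 ≤ k₀) (hγ : 0 ≤ γ)
    (hk₀bound : ∀ V : ∀ i, Fin (nd i) → ℝ,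
      (A *ᵥ (∑ i, (R i)ᵀ *ᵥ V i)) ⬝ᵥ (∑ i, (R i)ᵀ *ᵥ V i)
        ≤ k₀ * ∑ i, (A *ᵥ ((R i)ᵀ *ᵥ V i)) ⬝ᵥ ((R i)ᵀ *ᵥ V i))
    (x : (Fin m → ℝ) × ∀ i, Fin (nd i) → ℝ)
    (hEμ : ((Zᵀ * A * Z) *ᵥ x.1) ⬝ᵥ x.1 ≤ μ * ((Et *ᵥ x.1) ⬝ᵥ x.1))
    (hloc : ∀ i, (A *ᵥ ((R i)ᵀ *ᵥ (D i *ᵥ x.2 i))) ⬝ᵥ ((R i)ᵀ *ᵥ (D i *ᵥ x.2 i))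
      ≤ γ * ((B i *ᵥ x.2 i) ⬝ᵥ x.2 i)) :
    aNorm A (assemble A Z Et R D x) ^ 2
      ≤ (k₀ * γ * (1 + ε ^ 2) + μ
          + √((k₀ * γ * (1 + ε ^ 2) - μ) ^ 2 + 4 * μ * (k₀ * γ) * ε ^ 2)) / 2
        * fictitiousForm Et B x x := by
  obtain ⟨u, v⟩ := x
  set P₀ := coarseProj A Z (Zᵀ * A * Z)
  set s := prolong R D v
  -- split `ℛ x` into its component in `range Z` and the `A`-orthogonal remainder `(I - P₀) s`
  set w := u + (Zᵀ * A * Z)⁻¹ *ᵥ (Zᵀ *ᵥ (A *ᵥ s)) - Et⁻¹ *ᵥ (Zᵀ *ᵥ (A *ᵥ s))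
  have hZw : Z *ᵥ w = Z *ᵥ u + (P₀ - coarseProj A Z Et) *ᵥ s := by
    simp only [w, P₀, mulVec_add, mulVec_sub, sub_mulVec, coarseProj_mulVec]; abel
  have hsplit : assemble A Z Et R D (u, v) = Z *ᵥ w + (s - P₀ *ᵥ s) := by
    rw [hZw, assemble, sub_mulVec, sub_mulVec, one_mulVec]; abel
  have hw : aNorm A (Z *ᵥ w) ≤ aNorm A (Z *ᵥ u) + ε * aNorm A s := by
    rw [hZw]; exact (aNorm_add_le hA.posSemidef _ _).trans (by gcongr; exact hε s)
  have hu : aNorm A (Z *ᵥ u) ^ 2 ≤ μ * ((Et *ᵥ u) ⬝ᵥ u) := by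
    rw [aNorm_mulVec_sq hA.posSemidef]; exact hEμ
  have hs : aNorm A s ^ 2 ≤ k₀ * γ * ∑ i, (B i *ᵥ v i) ⬝ᵥ v i := by
    rw [aNorm_sq hA.posSemidef]; exact mulVec_prolong_dotProduct_le hk₀ hk₀bound hloc
  calc aNorm A (assemble A Z Et R D (u, v)) ^ 2
      = aNorm A (Z *ᵥ w) ^ 2 + aNorm A (s - P₀ *ᵥ s) ^ 2 := by
        rw [hsplit, aNorm_sq_add_of_transpose_mulVec_eq_zero hA.posSemidef w
          (transpose_mulVec_mulVec_sub_coarseProj hA hZ s)]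
    _ ≤ (aNorm A (Z *ᵥ u) + ε * aNorm A s) ^ 2 + aNorm A s ^ 2 := by
        gcongr
        · exact aNorm_nonneg _
        · exact aNorm_nonneg _
        · exact aNorm_sub_coarseProj_le hA hZ s
    _ ≤ _ := add_mul_sq_add_sq_le (aNorm_nonneg s) (hEt.mulVec_dotProduct_self_nonneg u)
        (Finset.sum_nonneg fun i _ => (hB i).mulVec_dotProduct_self_nonneg (v i)) hμ
        (mul_nonneg hk₀ hγ) hε₀ hu hs

theorem exists_mulVec_add_prolong_eq {p : ∀ i, Matrix (Fin (nd i)) (Fin (nd i)) ℝ}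
    (hPOU : ∑ i, (R i)ᵀ * D i * R i = 1)
    (hpV₀ : ∀ j (v : Fin (nd j) → ℝ),
      ((R j)ᵀ * D j * p j) *ᵥ v ∈ Set.range (fun β : Fin m → ℝ => Z *ᵥ β))
    (U : Fin n → ℝ) :
    ∃ β, Z *ᵥ β + prolong R D (fun j => (1 - p j) *ᵥ (R j *ᵥ U)) = U := by
  choose β hβ using fun j => hpV₀ j (R j *ᵥ U)
  refine ⟨∑ j, β j, ?_⟩
  have hU : ∑ j, (R j)ᵀ *ᵥ (D j *ᵥ (R j *ᵥ U)) = U := by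
    simpa only [sum_mulVec, mulVec_mulVec, Matrix.mul_assoc, one_mulVec] using
      congrArg (· *ᵥ U) hPOU
  simp only [prolong, mulVec_sum, hβ, sub_mulVec, one_mulVec, mulVec_sub, Finset.sum_sub_distrib,
    hU, ← mulVec_mulVec]
  abel

theorem exists_assemble_eq_and_fictitiousForm_le (hA : A.PosDef) (hZ : LinearIndependent ℝ Zᵀ)
    {Vs : ∀ i, Submodule ℝ (Fin (nd i) → ℝ)} {p : ∀ i, Matrix (Fin (nd i)) (Fin (nd i)) ℝ}
    {ε μ' c : ℝ} (hε₀ : 0 ≤ ε)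
    (hε : ∀ y, aNorm A ((coarseProj A Z (Zᵀ * A * Z) - coarseProj A Z Et) *ᵥ y) ≤ ε * aNorm A y)
    (hμ' : 0 < μ') (hk₀ : 0 ≤ k₀) (hγ : 0 ≤ γ)
    (hEμ : ∀ u, μ' * ((Et *ᵥ u) ⬝ᵥ u) ≤ ((Zᵀ * A * Z) *ᵥ u) ⬝ᵥ u)
    (hk₀bound : ∀ V : ∀ i, Fin (nd i) → ℝ,
      (A *ᵥ (∑ i, (R i)ᵀ *ᵥ V i)) ⬝ᵥ (∑ i, (R i)ᵀ *ᵥ V i)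
        ≤ k₀ * ∑ i, (A *ᵥ ((R i)ᵀ *ᵥ V i)) ⬝ᵥ ((R i)ᵀ *ᵥ V i))
    (hγbound : ∀ i (v : Fin (nd i) → ℝ), (∀ w ∈ Vs i, (B i *ᵥ v) ⬝ᵥ w = 0) →
      (A *ᵥ ((R i)ᵀ *ᵥ (D i *ᵥ v))) ⬝ᵥ ((R i)ᵀ *ᵥ (D i *ᵥ v)) ≤ γ * ((B i *ᵥ v) ⬝ᵥ v))
    (hPOU : ∑ i, (R i)ᵀ * D i * R i = 1)
    (hpV₀ : ∀ j (v : Fin (nd j) → ℝ),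
      ((R j)ᵀ * D j * p j) *ᵥ v ∈ Set.range (fun β : Fin m → ℝ => Z *ᵥ β))
    (hpW : ∀ j (v : Fin (nd j) → ℝ), ∀ w ∈ Vs j, (B j *ᵥ ((1 - p j) *ᵥ v)) ⬝ᵥ w = 0)
    (U : Fin n → ℝ)
    (hGenEO2 : ∑ j, (B j *ᵥ ((1 - p j) *ᵥ (R j *ᵥ U))) ⬝ᵥ ((1 - p j) *ᵥ (R j *ᵥ U))
      ≤ c * ((A *ᵥ U) ⬝ᵥ U)) :
    ∃ x : (Fin m → ℝ) × ∀ i, Fin (nd i) → ℝ, (∀ i, ∀ w ∈ Vs i, (B i *ᵥ x.2 i) ⬝ᵥ w = 0) ∧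
      assemble A Z Et R D x = U ∧
      fictitiousForm Et B x x ≤ (1 / μ' * (1 + ε * √(k₀ * γ * c)) ^ 2 + c) * ((A *ᵥ U) ⬝ᵥ U) := by
  obtain ⟨β, hβ⟩ := exists_mulVec_add_prolong_eq hPOU hpV₀ U
  set v := fun j => (1 - p j) *ᵥ (R j *ᵥ U)
  set s := prolong R D v
  set u := Et⁻¹ *ᵥ (Zᵀ *ᵥ (A *ᵥ s)) + β
  have hv : ∀ i, ∀ w ∈ Vs i, (B i *ᵥ v i) ⬝ᵥ w = 0 := fun i => hpW i _
  refine ⟨(u, v), hv, ?_, ?_⟩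
  · rw [← hβ]
    simp only [assemble, u, mulVec_add, sub_mulVec, one_mulVec, coarseProj_mulVec]
    abel
  have hs : aNorm A s ≤ √(k₀ * γ * c) * aNorm A U := by
    rw [← Real.sqrt_sq (aNorm_nonneg U), ← Real.sqrt_mul' _ (sq_nonneg _)]
    refine Real.le_sqrt_of_sq_le ?_
    rw [aNorm_sq hA.posSemidef, aNorm_sq hA.posSemidef, mul_assoc]
    exact (mulVec_prolong_dotProduct_le hk₀ hk₀bound fun i => hγbound i _ (hv i)).trans
      (by gcongr)
  -- `Z u = P̃₀ s + Z β = P₀ U - (P₀ - P̃₀) s`, as `U = Z β + s`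
  have hZu : Z *ᵥ u = coarseProj A Z (Zᵀ * A * Z) *ᵥ U
      - (coarseProj A Z (Zᵀ * A * Z) - coarseProj A Z Et) *ᵥ s := by
    rw [← hβ, mulVec_add (coarseProj _ _ _), coarseProj_mulVec_mulVec hA hZ, sub_mulVec]
    simp only [u, mulVec_add, coarseProj_mulVec]
    abel
  have hu : aNorm A (Z *ᵥ u) ≤ (1 + ε * √(k₀ * γ * c)) * aNorm A U := by
    rw [hZu]
    calc _ ≤ aNorm A U + ε * aNorm A s :=
          (aNorm_sub_le hA.posSemidef _ _).trans (add_le_add (aNorm_coarseProj_le hA hZ U) (hε s))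
      _ ≤ _ := by rw [add_mul, one_mul, mul_assoc]; gcongr
  have hEu : (Et *ᵥ u) ⬝ᵥ u ≤ 1 / μ' * aNorm A (Z *ᵥ u) ^ 2 := by
    rw [aNorm_mulVec_sq hA.posSemidef, one_div_mul_eq_div, le_div_iff₀ hμ', mul_comm]
    exact hEμ u
  calc fictitiousForm Et B (u, v) (u, v) = (Et *ᵥ u) ⬝ᵥ u + ∑ i, (B i *ᵥ v i) ⬝ᵥ v i := rfl
    _ ≤ 1 / μ' * ((1 + ε * √(k₀ * γ * c)) * aNorm A U) ^ 2 + c * ((A *ᵥ U) ⬝ᵥ U) :=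
        add_le_add (hEu.trans (by gcongr; exact aNorm_nonneg _)) hGenEO2
    _ = _ := by rw [mul_pow, aNorm_sq hA.posSemidef]; ring

end GenEO

theorem stmt17_general {n m N : ℕ} (A : Matrix (Fin n) (Fin n) ℝ) (hA : A.PosDef)
    (Z : Matrix (Fin n) (Fin m) ℝ) (hZ : LinearIndependent ℝ Zᵀ)
    (Et : Matrix (Fin m) (Fin m) ℝ) (hEt : Et.PosDef)
    (nd : Fin N → ℕ)
    (R : ∀ i : Fin N, Matrix (Fin (nd i)) (Fin n) ℝ)
    (D : ∀ i : Fin N, Matrix (Fin (nd i)) (Fin (nd i)) ℝ)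
    (hD : ∀ i, (D i).IsDiag)
    (k₀ k₁ τ γ μ μ' : ℝ) (hk₀ : 0 < k₀) (hk₁ : 0 < k₁) (hτ : 0 < τ) (hγ : 0 < γ)
    (hμ : 0 < μ) (hμ' : 0 < μ')
    (hPOU : ∑ i, (R i)ᵀ * D i * R i = (1 : Matrix (Fin n) (Fin n) ℝ))
    (hk₀bound : ∀ V : ∀ i : Fin N, Fin (nd i) → ℝ,
      (A *ᵥ (∑ i, (R i)ᵀ *ᵥ V i)) ⬝ᵥ (∑ i, (R i)ᵀ *ᵥ V i)
        ≤ k₀ * ∑ i, (A *ᵥ ((R i)ᵀ *ᵥ V i)) ⬝ᵥ ((R i)ᵀ *ᵥ V i))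
    (hEμ : ∀ u : Fin m → ℝ,
      μ' * ((Et *ᵥ u) ⬝ᵥ u) ≤ ((Zᵀ * A * Z) *ᵥ u) ⬝ᵥ u
        ∧ ((Zᵀ * A * Z) *ᵥ u) ⬝ᵥ u ≤ μ * ((Et *ᵥ u) ⬝ᵥ u))
    (B : ∀ i : Fin N, Matrix (Fin (nd i)) (Fin (nd i)) ℝ)
    (hB : ∀ i, (B i).PosDef)
    (Vs : ∀ i : Fin N, Submodule ℝ (Fin (nd i) → ℝ))
    (ξ : ∀ i : Fin N, Matrix (Fin (nd i)) (Fin (nd i)) ℝ)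
    (hξmem : ∀ i (u : Fin (nd i) → ℝ), (ξ i) *ᵥ u ∈ Vs i)
    (hξorth : ∀ i (u : Fin (nd i) → ℝ), ∀ v ∈ Vs i,
      ((B i) *ᵥ (u - (ξ i) *ᵥ u)) ⬝ᵥ v = 0)
    (q : ∀ i : Fin N, Matrix (Fin (nd i)) (Fin (nd i)) ℝ)
    (hqid : ∀ i (v : Fin (nd i) → ℝ),
      (∀ w ∈ Vs i, ((B i) *ᵥ v) ⬝ᵥ w = 0) → (q i) *ᵥ v = v)
    (hqorth : ∀ i (u v : Fin (nd i) → ℝ),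
      (∀ w ∈ Vs i, ((B i) *ᵥ v) ⬝ᵥ w = 0) → (u - (q i) *ᵥ u) ⬝ᵥ v = 0)
    (hγbound : ∀ i (v : Fin (nd i) → ℝ), (∀ w ∈ Vs i, ((B i) *ᵥ v) ⬝ᵥ w = 0) →
      (A *ᵥ ((R i)ᵀ *ᵥ ((D i) *ᵥ v))) ⬝ᵥ ((R i)ᵀ *ᵥ ((D i) *ᵥ v))
        ≤ γ * (((B i) *ᵥ v) ⬝ᵥ v))
    (p : ∀ j : Fin N, Matrix (Fin (nd j)) (Fin (nd j)) ℝ)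
    (hpV₀ : ∀ j (v : Fin (nd j) → ℝ),
      ((R j)ᵀ * D j * p j) *ᵥ v ∈ Set.range (fun β : Fin m → ℝ => Z *ᵥ β))
    (hpW : ∀ j (v : Fin (nd j) → ℝ), ∀ w ∈ Vs j,
      ((B j) *ᵥ ((1 - p j) *ᵥ v)) ⬝ᵥ w = 0)
    (hGenEO2 : ∀ U : Fin n → ℝ,
      ∑ j, ((B j) *ᵥ ((1 - p j) *ᵥ ((R j) *ᵥ U))) ⬝ᵥ ((1 - p j) *ᵥ ((R j) *ᵥ U))
        ≤ (k₁ / τ) * ((A *ᵥ U) ⬝ᵥ U))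
    (εA cT cR : ℝ)
    (hεA : εA = aOpNorm A (Z * (Zᵀ * A * Z)⁻¹ * Zᵀ * A - Z * Et⁻¹ * Zᵀ * A))
    (hcT : cT = 1 / ((1 / μ') * (1 + εA * Real.sqrt (k₀ * k₁ * γ / τ)) ^ 2 + k₁ / τ))
    (hcR : cR = (k₀ * γ * (1 + εA ^ 2) + μ
        + Real.sqrt ((k₀ * γ * (1 + εA ^ 2) - μ) ^ 2 + 4 * μ * k₀ * γ * εA ^ 2)) / 2) :
    ∀ (lam : ℝ) (U : Fin n → ℝ), U ≠ 0 →
      ((Z * Et⁻¹ * Zᵀ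
          + (1 - Z * Et⁻¹ * Zᵀ * A) *
            (∑ i, (R i)ᵀ * D i * q i * ((1 - ξ i) * (B i)⁻¹) * q i * D i * R i) *
            (1 - (Z * Et⁻¹ * Zᵀ * A)ᵀ)) * A) *ᵥ U = lam • U →
      cT ≤ lam ∧ lam ≤ cR := by
  intro lam U hU hEig
  have hε : ∀ y, aNorm A ((coarseProj A Z (Zᵀ * A * Z) - coarseProj A Z Et) *ᵥ y)
      ≤ εA * aNorm A y := hεA ▸ aNorm_mulVec_le_aOpNorm_mul hA _
  have hε₀ : 0 ≤ εA := hεA ▸ aOpNorm_nonneg _ _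
  refine fictitiousSpace_eigenvalue_bounds (Matrix.toBilin' A) (fictitiousForm Et B)
    (isSymm_fictitiousForm hEt.isHermitian fun i => (hB i).isHermitian)
    (fictitiousForm_self_nonneg hEt.posSemidef fun i => (hB i).posSemidef) (assemble A Z Et R D)
    {x | ∀ i, ∀ w ∈ Vs i, (B i *ᵥ x.2 i) ⬝ᵥ w = 0}
    (xs := fictitiousLift A Z Et R D ξ B q (A *ᵥ U)) (by rw [hcT]; positivity)
    (by simpa [toBilin'_apply'] using hA.dotProduct_mulVec_pos hU)
    (fun i => bDagger_mulVec_mem_orthogonal (hξorth i) _)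
    (by rw [← hEig, ← mulVec_mulVec]; exact (precond_mulVec_eq_assemble hξorth hqid _).symm)
    (fun x hx => by
      rw [toBilin'_apply']
      exact assemble_dotProduct_eq_fictitiousForm hEt.det_pos.ne'.isUnit hB hD hξmem hqorth _ hx)
    (fun x hx => by
      rw [toBilin'_apply', dotProduct_comm, ← aNorm_sq hA.posSemidef, hcR,
        show 4 * μ * k₀ * γ * εA ^ 2 = 4 * μ * (k₀ * γ) * εA ^ 2 by ring]
      exact aNorm_assemble_sq_le hA hZ hEt.posSemidef (fun i => (hB i).posSemidef) hε₀ hε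
        hμ.le hk₀.le hγ.le hk₀bound x (hEμ x.1).2 (fun i => hγbound i _ (hx i)))
    ?_
  obtain ⟨x, hx, hℛx, hb⟩ := exists_assemble_eq_and_fictitiousForm_le hA hZ hε₀ hε hμ' hk₀.le hγ.le
    (fun u => (hEμ u).1) hk₀bound hγbound hPOU hpV₀ hpW U (hGenEO2 U)
  refine ⟨x, hx, hℛx, ?_⟩
  rw [toBilin'_apply', dotProduct_comm, hcT, show k₀ * k₁ * γ / τ = k₀ * γ * (k₁ / τ) by ring,
    one_div_mul_eq_div, div_le_iff₀ (by positivity), mul_comm]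
  exact hb

/-- Spectral estimate for the GenEO-2 preconditioner with inexact coarse
solve: under partition of unity, the `k₀`-bound, spectral equivalence
`μ′ ⟨Ẽ u, u⟩ ≤ ⟨E u, u⟩ ≤ μ ⟨Ẽ u, u⟩`, local SPD matrices `B_i`, subspaces `V_i` with
`R_iᵀ D_i (V_i) ⊆ V₀`, `W_i` the `B_i`-orthogonal complement of `V_i` (described by the
predicate `∀ w ∈ V_i, ⟨B_i v, w⟩ = 0`), `ξ_i` the `B_i`-orthogonal projection onto `V_i`,
`q_i` the Euclidean orthogonal projection onto `W_i`, `B_i† := (I − ξ_i) B_i⁻¹`, the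
`γ`-bound on `W_i`, and projections `p_j` with `range(R_jᵀ D_j p_j) ⊆ V₀`,
`range(I − p_j) ⊆ W_j` and the `(k₁/τ)`-bound, every eigenvalue `λ` of `M⁻¹ A`, where
`M⁻¹ := Z Ẽ⁻¹ Zᵀ + (I − P̃₀)(∑ R_iᵀ D_i q_i B_i† q_i D_i R_i)(I − P̃₀ᵀ)`, satisfies
`c_T ≤ λ ≤ c_R`. -/
theorem stmt17 {n m N : ℕ} (A : Matrix (Fin n) (Fin n) ℝ) (hA : A.PosDef)
    (Z : Matrix (Fin n) (Fin m) ℝ) (hZ : LinearIndependent ℝ Zᵀ)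
    (Et : Matrix (Fin m) (Fin m) ℝ) (hEt : Et.PosDef)
    (nd : Fin N → ℕ)
    (R : ∀ i : Fin N, Matrix (Fin (nd i)) (Fin n) ℝ)
    (D : ∀ i : Fin N, Matrix (Fin (nd i)) (Fin (nd i)) ℝ)
    (hD : ∀ i, (D i).IsDiag)
    (k₀ k₁ τ γ μ μ' : ℝ) (hk₀ : 0 < k₀) (hk₁ : 0 < k₁) (hτ : 0 < τ) (hγ : 0 < γ)
    (hμ : 0 < μ) (hμ' : 0 < μ')
    (hPOU : ∑ i, (R i)ᵀ * D i * R i = (1 : Matrix (Fin n) (Fin n) ℝ))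
    (hk₀bound : ∀ V : ∀ i : Fin N, Fin (nd i) → ℝ,
      (A *ᵥ (∑ i, (R i)ᵀ *ᵥ V i)) ⬝ᵥ (∑ i, (R i)ᵀ *ᵥ V i)
        ≤ k₀ * ∑ i, (A *ᵥ ((R i)ᵀ *ᵥ V i)) ⬝ᵥ ((R i)ᵀ *ᵥ V i))
    (hEμ : ∀ u : Fin m → ℝ,
      μ' * ((Et *ᵥ u) ⬝ᵥ u) ≤ ((Zᵀ * A * Z) *ᵥ u) ⬝ᵥ u
        ∧ ((Zᵀ * A * Z) *ᵥ u) ⬝ᵥ u ≤ μ * ((Et *ᵥ u) ⬝ᵥ u))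
    (B : ∀ i : Fin N, Matrix (Fin (nd i)) (Fin (nd i)) ℝ)
    (hB : ∀ i, (B i).PosDef)
    (Vs : ∀ i : Fin N, Submodule ℝ (Fin (nd i) → ℝ))
    (hVsV₀ : ∀ i, ∀ v ∈ Vs i,
      (R i)ᵀ *ᵥ ((D i) *ᵥ v) ∈ Set.range (fun β : Fin m → ℝ => Z *ᵥ β))
    (ξ : ∀ i : Fin N, Matrix (Fin (nd i)) (Fin (nd i)) ℝ)
    (hξmem : ∀ i (u : Fin (nd i) → ℝ), (ξ i) *ᵥ u ∈ Vs i)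
    (hξid : ∀ i, ∀ v ∈ Vs i, (ξ i) *ᵥ v = v)
    (hξorth : ∀ i (u : Fin (nd i) → ℝ), ∀ v ∈ Vs i,
      ((B i) *ᵥ (u - (ξ i) *ᵥ u)) ⬝ᵥ v = 0)
    (q : ∀ i : Fin N, Matrix (Fin (nd i)) (Fin (nd i)) ℝ)
    (hqmem : ∀ i (u : Fin (nd i) → ℝ), ∀ w ∈ Vs i, ((B i) *ᵥ ((q i) *ᵥ u)) ⬝ᵥ w = 0)
    (hqid : ∀ i (v : Fin (nd i) → ℝ),
      (∀ w ∈ Vs i, ((B i) *ᵥ v) ⬝ᵥ w = 0) → (q i) *ᵥ v = v)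
    (hqorth : ∀ i (u v : Fin (nd i) → ℝ),
      (∀ w ∈ Vs i, ((B i) *ᵥ v) ⬝ᵥ w = 0) → (u - (q i) *ᵥ u) ⬝ᵥ v = 0)
    (hγbound : ∀ i (v : Fin (nd i) → ℝ), (∀ w ∈ Vs i, ((B i) *ᵥ v) ⬝ᵥ w = 0) →
      (A *ᵥ ((R i)ᵀ *ᵥ ((D i) *ᵥ v))) ⬝ᵥ ((R i)ᵀ *ᵥ ((D i) *ᵥ v))
        ≤ γ * (((B i) *ᵥ v) ⬝ᵥ v))
    (p : ∀ j : Fin N, Matrix (Fin (nd j)) (Fin (nd j)) ℝ)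
    (hpV₀ : ∀ j (v : Fin (nd j) → ℝ),
      ((R j)ᵀ * D j * p j) *ᵥ v ∈ Set.range (fun β : Fin m → ℝ => Z *ᵥ β))
    (hpW : ∀ j (v : Fin (nd j) → ℝ), ∀ w ∈ Vs j,
      ((B j) *ᵥ ((1 - p j) *ᵥ v)) ⬝ᵥ w = 0)
    (hGenEO2 : ∀ U : Fin n → ℝ,
      ∑ j, ((B j) *ᵥ ((1 - p j) *ᵥ ((R j) *ᵥ U))) ⬝ᵥ ((1 - p j) *ᵥ ((R j) *ᵥ U))
        ≤ (k₁ / τ) * ((A *ᵥ U) ⬝ᵥ U))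
    (εA cT cR : ℝ)
    (hεA : εA = aOpNorm A (Z * (Zᵀ * A * Z)⁻¹ * Zᵀ * A - Z * Et⁻¹ * Zᵀ * A))
    (hcT : cT = 1 / ((1 / μ') * (1 + εA * Real.sqrt (k₀ * k₁ * γ / τ)) ^ 2 + k₁ / τ))
    (hcR : cR = (k₀ * γ * (1 + εA ^ 2) + μ
        + Real.sqrt ((k₀ * γ * (1 + εA ^ 2) - μ) ^ 2 + 4 * μ * k₀ * γ * εA ^ 2)) / 2) :
    ∀ (lam : ℝ) (U : Fin n → ℝ), U ≠ 0 →
      ((Z * Et⁻¹ * Zᵀ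
          + (1 - Z * Et⁻¹ * Zᵀ * A) *
            (∑ i, (R i)ᵀ * D i * q i * ((1 - ξ i) * (B i)⁻¹) * q i * D i * R i) *
            (1 - (Z * Et⁻¹ * Zᵀ * A)ᵀ)) * A) *ᵥ U = lam • U →
      cT ≤ lam ∧ lam ≤ cR :=
  stmt17_general A hA Z hZ Et hEt nd R D hD k₀ k₁ τ γ μ μ' hk₀ hk₁ hτ hγ hμ hμ' hPOU hk₀bound hEμ B
    hB Vs ξ hξmem hξorth q hqid hqorth hγbound p hpV₀ hpW hGenEO2 εA cT cR hεA hcT hcR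
end

section
/- (Annex: stable local components built on subdomains extended by one layer) Let A be a symmetric positive definite n×n real matrix. For i = 1,…,N let R_i (size n_i×n), R̃_i (size ñ_i×n) and diagonal D̃_i (size ñ_i×ñ_i) be real matrices satisfying R_iᵀ R_i R̃_iᵀ D̃_i = R̃_iᵀ D̃_i. Let A_i^Neu be symmetric positive semidefinite ñ_i×ñ_i matrices with ∑_{i=1}^N ⟨A_i^Neu R̃_i U, R̃_i U⟩ ≤ k̃₁ ⟨A U, U⟩ for all U ∈ ℝⁿ, and let π̃_i : ℝ^{ñ_i} → ℝ^{ñ_i} be linear maps such that ⟨A R̃_iᵀ D̃_i (I − π̃_i) u, R̃_iᵀ D̃_i (I − π̃_i) u⟩ ≤ τ ⟨A_i^Neu u, u⟩ for all u ∈ ℝ^{ñ_i}. Then, setting U_i := R_i R̃_iᵀ D̃_i (I − π̃_i) R̃_i U, one has ∑_{i=1}^N ⟨A R_iᵀ U_i, R_iᵀ U_i⟩ ≤ τ k̃₁ ⟨A U, U⟩ for all U ∈ ℝⁿ. -/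
open Matrix

/-! Since `R_iᵀ R_i` fixes the range of `R̃_iᵀ D̃_i`, the extension `R_iᵀ U_i` equals
`R̃_iᵀ D̃_i (I − π̃_i) R̃_i U`; the local bound with `u = R̃_i U`, summed over `i`, is then
controlled by the Neumann bound. -/

theorem Matrix.mulVec_mulVec_mulVec_mulVec_of_mul_eq {α : Type*} [NonUnitalSemiring α]
    {l m n o : Type*} [Fintype l] [Fintype m] [Fintype n] [Fintype o]
    {P : Matrix n m α} {Q : Matrix m n α} {B : Matrix n l α} {C : Matrix l o α}
    (h : P * Q * B * C = B * C) (v : o → α) :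
    P *ᵥ (Q *ᵥ (B *ᵥ (C *ᵥ v))) = B *ᵥ (C *ᵥ v) := by
  simp only [mulVec_mulVec, ← Matrix.mul_assoc, h]

theorem Finset.sum_le_mul_mul_of_le_mul {ι : Type*} (s : Finset ι) {f g : ι → ℝ} {τ k a : ℝ}
    (hτ : 0 ≤ τ) (hfg : ∀ i ∈ s, f i ≤ τ * g i) (hg : ∑ i ∈ s, g i ≤ k * a) :
    ∑ i ∈ s, f i ≤ τ * k * a :=
  calc ∑ i ∈ s, f i ≤ ∑ i ∈ s, τ * g i := Finset.sum_le_sum hfg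
    _ = τ * ∑ i ∈ s, g i := (Finset.mul_sum _ _ _).symm
    _ ≤ τ * k * a := by rw [mul_assoc]; exact mul_le_mul_of_nonneg_left hg hτ

theorem stmt18_general {n N : ℕ} (A : Matrix (Fin n) (Fin n) ℝ)
    (nd ntd : Fin N → ℕ)
    (R : ∀ i : Fin N, Matrix (Fin (nd i)) (Fin n) ℝ)
    (Rt : ∀ i : Fin N, Matrix (Fin (ntd i)) (Fin n) ℝ)
    (Dt : ∀ i : Fin N, Matrix (Fin (ntd i)) (Fin (ntd i)) ℝ)
    (hcompat : ∀ i, (R i)ᵀ * R i * (Rt i)ᵀ * Dt i = (Rt i)ᵀ * Dt i)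
    (ANeu : ∀ i : Fin N, Matrix (Fin (ntd i)) (Fin (ntd i)) ℝ)
    (k₁t τ : ℝ) (hτ : 0 < τ)
    (hNeuSum : ∀ U : Fin n → ℝ,
      ∑ i, ((ANeu i) *ᵥ ((Rt i) *ᵥ U)) ⬝ᵥ ((Rt i) *ᵥ U) ≤ k₁t * ((A *ᵥ U) ⬝ᵥ U))
    (π : ∀ i : Fin N, Matrix (Fin (ntd i)) (Fin (ntd i)) ℝ)
    (hπ : ∀ i (u : Fin (ntd i) → ℝ),
      (A *ᵥ ((Rt i)ᵀ *ᵥ ((Dt i) *ᵥ ((1 - π i) *ᵥ u)))) ⬝ᵥ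
          ((Rt i)ᵀ *ᵥ ((Dt i) *ᵥ ((1 - π i) *ᵥ u)))
        ≤ τ * (((ANeu i) *ᵥ u) ⬝ᵥ u)) :
    ∀ U : Fin n → ℝ,
      ∑ i, (A *ᵥ ((R i)ᵀ *ᵥ ((R i) *ᵥ ((Rt i)ᵀ *ᵥ ((Dt i) *ᵥ
              ((1 - π i) *ᵥ ((Rt i) *ᵥ U))))))) ⬝ᵥ
          ((R i)ᵀ *ᵥ ((R i) *ᵥ ((Rt i)ᵀ *ᵥ ((Dt i) *ᵥ ((1 - π i) *ᵥ ((Rt i) *ᵥ U))))))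
        ≤ τ * k₁t * ((A *ᵥ U) ⬝ᵥ U) := by
  intro U
  simp only [mulVec_mulVec_mulVec_mulVec_of_mul_eq (hcompat _)]
  exact Finset.univ.sum_le_mul_mul_of_le_mul hτ.le (fun i _ => hπ i _) (hNeuSum U)

/-- Annex: stable local components built on subdomains extended by one
layer: if `R_iᵀ R_i R̃_iᵀ D̃_i = R̃_iᵀ D̃_i`, the Neumann matrices satisfy
`∑ ⟨A_i^Neu R̃_i U, R̃_i U⟩ ≤ k̃₁ ⟨A U, U⟩` and the local projections satisfy
`⟨A R̃_iᵀ D̃_i (I − π̃_i) u, R̃_iᵀ D̃_i (I − π̃_i) u⟩ ≤ τ ⟨A_i^Neu u, u⟩`, then for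
`U_i := R_i R̃_iᵀ D̃_i (I − π̃_i) R̃_i U` one has
`∑ ⟨A R_iᵀ U_i, R_iᵀ U_i⟩ ≤ τ k̃₁ ⟨A U, U⟩` for all `U`. -/
theorem stmt18 {n N : ℕ} (A : Matrix (Fin n) (Fin n) ℝ) (hA : A.PosDef)
    (nd ntd : Fin N → ℕ)
    (R : ∀ i : Fin N, Matrix (Fin (nd i)) (Fin n) ℝ)
    (Rt : ∀ i : Fin N, Matrix (Fin (ntd i)) (Fin n) ℝ)
    (Dt : ∀ i : Fin N, Matrix (Fin (ntd i)) (Fin (ntd i)) ℝ)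
    (hDt : ∀ i, (Dt i).IsDiag)
    (hcompat : ∀ i, (R i)ᵀ * R i * (Rt i)ᵀ * Dt i = (Rt i)ᵀ * Dt i)
    (ANeu : ∀ i : Fin N, Matrix (Fin (ntd i)) (Fin (ntd i)) ℝ)
    (hANeu : ∀ i, (ANeu i).PosSemidef)
    (k₁t τ : ℝ) (hk₁t : 0 < k₁t) (hτ : 0 < τ)
    (hNeuSum : ∀ U : Fin n → ℝ,
      ∑ i, ((ANeu i) *ᵥ ((Rt i) *ᵥ U)) ⬝ᵥ ((Rt i) *ᵥ U) ≤ k₁t * ((A *ᵥ U) ⬝ᵥ U))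
    (π : ∀ i : Fin N, Matrix (Fin (ntd i)) (Fin (ntd i)) ℝ)
    (hπ : ∀ i (u : Fin (ntd i) → ℝ),
      (A *ᵥ ((Rt i)ᵀ *ᵥ ((Dt i) *ᵥ ((1 - π i) *ᵥ u)))) ⬝ᵥ
          ((Rt i)ᵀ *ᵥ ((Dt i) *ᵥ ((1 - π i) *ᵥ u)))
        ≤ τ * (((ANeu i) *ᵥ u) ⬝ᵥ u)) :
    ∀ U : Fin n → ℝ,
      ∑ i, (A *ᵥ ((R i)ᵀ *ᵥ ((R i) *ᵥ ((Rt i)ᵀ *ᵥ ((Dt i) *ᵥ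
              ((1 - π i) *ᵥ ((Rt i) *ᵥ U))))))) ⬝ᵥ
          ((R i)ᵀ *ᵥ ((R i) *ᵥ ((Rt i)ᵀ *ᵥ ((Dt i) *ᵥ ((1 - π i) *ᵥ ((Rt i) *ᵥ U))))))
        ≤ τ * k₁t * ((A *ᵥ U) ⬝ᵥ U) :=
  stmt18_general A nd ntd R Rt Dt hcompat ANeu k₁t τ hτ hNeuSum π hπ
end
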